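/- arXiv:1912.01253 — 2 statements merged into one kernel-verified Lean document; each statement's English description precedes it below -/
import Mathlib

section
/- For every subset U of ℝ^n, tconv(convexHull(U)) = tconv(convexHull(tconv(U))); i.e., repeatedly taking ordinary convex hull and tropical convex hull stabilizes after one step. -/
/-- A set `U ⊆ ℝ^n` is tropically convex (min-plus convention). -/
def TropConvex {n : ℕ} (U : Set (Fin n → ℝ)) : Prop :=
  ∀ x ∈ U, ∀ y ∈ U, ∀ a b : ℝ, min a b = 0 →
    (fun i => min (a + x i) (b + y i)) ∈ U

/-- The tropical convex hull: the intersection of all tropically convex sets containing `U`. -/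
def tconv {n : ℕ} (U : Set (Fin n → ℝ)) : Set (Fin n → ℝ) :=
  ⋂₀ {V | TropConvex V ∧ U ⊆ V}

/-!
A map `z ↦ t • z + w` with `t ≥ 0` is coordinatewise monotone and affine, so it sends the
tropical combination with coefficients `(a, b)` to the one with coefficients `(t * a, t * b)`;
hence preimages of tropically convex sets under it are tropically convex. Applying this in each
argument of a convex combination shows that the tropical hull of a convex set is convex. So
`tconv (convexHull U)` is convex, tropically convex and contains `tconv U`, hence contains
`tconv (convexHull (tconv U))`.
-/

variable {n : ℕ}

theorem subset_tconv (S : Set (Fin n → ℝ)) : S ⊆ tconv S :=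
  fun _ hx => Set.mem_sInter.mpr fun _ hV => hV.2 hx

theorem tconv_min {S V : Set (Fin n → ℝ)} (hSV : S ⊆ V) (hV : TropConvex V) : tconv S ⊆ V :=
  fun _ hz => Set.mem_sInter.mp hz V ⟨hV, hSV⟩

theorem tropConvex_tconv (S : Set (Fin n → ℝ)) : TropConvex (tconv S) :=
  fun _ hx _ hy _ _ hab => Set.mem_sInter.mpr fun V hV =>
    hV.1 _ (Set.mem_sInter.mp hx V hV) _ (Set.mem_sInter.mp hy V hV) _ _ hab

theorem tconv_mono {S T : Set (Fin n → ℝ)} (h : S ⊆ T) : tconv S ⊆ tconv T :=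
  tconv_min (h.trans (subset_tconv T)) (tropConvex_tconv T)

theorem TropConvex.preimage_smul_add {V : Set (Fin n → ℝ)} (hV : TropConvex V) {t : ℝ}
    (ht : 0 ≤ t) (w : Fin n → ℝ) : TropConvex ((fun z => t • z + w) ⁻¹' V) := by
  intro x hx y hy a b hab
  have hcomb : t • (fun i => min (a + x i) (b + y i)) + w =
      fun i => min (t * a + (t • x + w) i) (t * b + (t • y + w) i) := by
    funext i
    simp only [Pi.add_apply, Pi.smul_apply, smul_eq_mul]
    rw [mul_min_of_nonneg _ _ ht, ← min_add_add_right]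
    congr 1 <;> ring
  have hmin : min (t * a) (t * b) = 0 := by rw [← mul_min_of_nonneg _ _ ht, hab, mul_zero]
  simpa only [Set.mem_preimage, hcomb] using hV _ hx _ hy _ _ hmin

theorem convex_tconv {S : Set (Fin n → ℝ)} (hS : Convex ℝ S) : Convex ℝ (tconv S) := by
  intro z hz w hw t s ht hs hts
  have hright : ∀ y ∈ S, tconv S ⊆ (fun x => t • x + s • y) ⁻¹' tconv S := fun y hy =>
    tconv_min (fun x hx => subset_tconv S (hS hx hy ht hs hts))
      ((tropConvex_tconv S).preimage_smul_add ht _)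
  have hleft : tconv S ⊆ (fun y => s • y + t • z) ⁻¹' tconv S :=
    tconv_min (fun y hy => by simpa only [Set.mem_preimage, add_comm] using hright y hy hz)
      ((tropConvex_tconv S).preimage_smul_add hs _)
  simpa only [Set.mem_preimage, add_comm] using hleft hw

theorem tconv_convexHull_stabilizes (n : ℕ) (U : Set (Fin n → ℝ)) :
    tconv (convexHull ℝ U) = tconv (convexHull ℝ (tconv U)) := by
  refine (tconv_mono (convexHull_mono (subset_tconv U))).antisymm ?_
  refine tconv_min ?_ (tropConvex_tconv _)
  exact convexHull_min (tconv_mono (subset_convexHull ℝ U)) (convex_tconv (convex_convexHull ℝ U))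
end

section
/- Let a ∈ ℝ^n with a ≠ 0 and let H = {x ∈ ℝ^n : Σ_{k=1}^n a_k x_k ≥ 0} be the corresponding closed linear halfspace. Then for every j ∈ {0, 1, …, n}, either H + S_j = H or H + S_j = ℝ^n (where + is Minkowski sum). Moreover, H + S_j = H exactly when S_j ⊆ H. -/
open Pointwise

/-- The sectors `S_0, S_1, …, S_n` of `ℝ^n`, indexed by `j : Fin (n+1)`. -/
def sector {n : ℕ} (j : Fin (n + 1)) : Set (Fin n → ℝ) :=
  if _h : (j : ℕ) = 0 then {x | ∀ i, x i ≤ 0}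
  else {x | 0 ≤ x ⟨(j : ℕ) - 1, by have := j.isLt; omega⟩ ∧
            ∀ i, x i ≤ x ⟨(j : ℕ) - 1, by have := j.isLt; omega⟩}

/-!
The halfspace `H = {f ≥ 0}` is closed under addition and the sector `S` is a cone containing `0`.
If `S ⊆ H` this gives `H + S = H`. Otherwise some `s ∈ S` has `f s < 0`, and every `y` is
`(y - t • s) + t • s` with `t = |f y| / (-f s) ≥ 0`, the first summand lying in `H`.
-/

section Halfspace

variable {𝕜 E : Type*} [Field 𝕜] [LinearOrder 𝕜] [IsStrictOrderedRing 𝕜]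
  [AddCommGroup E] [Module 𝕜 E] (f : E →ₗ[𝕜] 𝕜) {S : Set E}

theorem halfspace_add_eq_self_of_subset (h0 : (0 : E) ∈ S) (hS : S ⊆ {x | 0 ≤ f x}) :
    {x | 0 ≤ f x} + S = {x | 0 ≤ f x} := by
  refine (Set.subset_add_left _ h0).antisymm' ?_
  rintro _ ⟨x, hx, s, hs, rfl⟩
  simpa only [Set.mem_ofPred_eq, map_add] using add_nonneg hx (hS hs)

theorem halfspace_add_eq_univ (hS : ∀ t : 𝕜, 0 ≤ t → ∀ s ∈ S, t • s ∈ S) {s : E} (hs : s ∈ S)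
    (hfs : f s < 0) : {x | 0 ≤ f x} + S = Set.univ := by
  refine Set.eq_univ_of_forall fun y => ?_
  set t := |f y| / -f s
  have ht : t * f s = -|f y| := by
    rw [div_mul_eq_mul_div, div_eq_iff (neg_ne_zero.mpr hfs.ne)]
    ring
  refine ⟨y - t • s, ?_, t • s, hS t (div_nonneg (abs_nonneg _) (neg_nonneg.mpr hfs.le)) s hs,
    sub_add_cancel y _⟩
  show 0 ≤ f (y - t • s)
  rw [map_sub, map_smul, smul_eq_mul, ht, sub_neg_eq_add]
  exact neg_le_iff_add_nonneg.mp (neg_abs_le _)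

theorem halfspace_add_cone (h0 : (0 : E) ∈ S) (hS : ∀ t : 𝕜, 0 ≤ t → ∀ s ∈ S, t • s ∈ S) :
    ({x | 0 ≤ f x} + S = {x | 0 ≤ f x} ∨ {x | 0 ≤ f x} + S = Set.univ) ∧
      ({x | 0 ≤ f x} + S = {x | 0 ≤ f x} ↔ S ⊆ {x | 0 ≤ f x}) := by
  have hiff : {x | 0 ≤ f x} + S = {x | 0 ≤ f x} ↔ S ⊆ {x | 0 ≤ f x} :=
    ⟨fun h => h ▸ Set.subset_add_right S (by simp), halfspace_add_eq_self_of_subset f h0⟩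
  refine ⟨?_, hiff⟩
  by_cases hsub : S ⊆ {x | 0 ≤ f x}
  · exact .inl (hiff.mpr hsub)
  · obtain ⟨s, hs, hfs⟩ := Set.not_subset.mp hsub
    exact .inr (halfspace_add_eq_univ f hS hs (not_le.mp hfs))

end Halfspace

theorem zero_mem_sector {n : ℕ} (j : Fin (n + 1)) : (0 : Fin n → ℝ) ∈ sector j := by
  unfold sector
  split_ifs <;> simp

theorem smul_mem_sector {n : ℕ} {j : Fin (n + 1)} {t : ℝ} (ht : 0 ≤ t) {x : Fin n → ℝ}
    (hx : x ∈ sector j) : t • x ∈ sector j := by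
  unfold sector at *
  split_ifs at hx ⊢
  · exact fun i => mul_nonpos_of_nonneg_of_nonpos ht (hx i)
  · exact ⟨mul_nonneg ht hx.1, fun i => mul_le_mul_of_nonneg_left (hx.2 i) ht⟩

theorem halfspace_add_sector_general (n : ℕ) (a : Fin n → ℝ)
    (H : Set (Fin n → ℝ)) (hH : H = {x | 0 ≤ ∑ k, a k * x k}) :
    ∀ j : Fin (n + 1),
      (H + sector j = H ∨ H + sector j = Set.univ) ∧
      (H + sector j = H ↔ sector j ⊆ H) := by
  subst hH
  intro j
  exact halfspace_add_cone (dotProductBilin ℝ ℝ a) (zero_mem_sector j)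
    fun _ ht _ => smul_mem_sector ht

theorem halfspace_add_sector (n : ℕ) (a : Fin n → ℝ) (ha : a ≠ 0)
    (H : Set (Fin n → ℝ)) (hH : H = {x | 0 ≤ ∑ k, a k * x k}) :
    ∀ j : Fin (n + 1),
      (H + sector j = H ∨ H + sector j = Set.univ) ∧
      (H + sector j = H ↔ sector j ⊆ H) :=
  halfspace_add_sector_general n a H hH
end
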